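/- arXiv:1404.0357 — 3 statements merged into one kernel-verified Lean document; each statement's English description precedes it below -/
import Mathlib

section
/- There exist an L⁰-convex, L⁰-absorbent and L⁰-balanced subset U of the L⁰-module L⁰ and an element X ∈ L⁰ such that 0 is a greatest lower bound (a.e. order) of {Y ∈ L⁰₊ : X ∈ Y·U} — so that p_U(X) = 0 < 1 — and yet X ∉ U. In particular the inclusion {X ∈ L⁰ : p_U(X) < 1} ⊆ U fails for some L⁰-convex, L⁰-absorbent, L⁰-balanced U (disproving Theorem 2.4 of Filipovic–Kupper–Vogelpoth). -/
open MeasureTheory Filter Pointwise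

variable {Ω : Type*} [MeasurableSpace Ω] (P : MeasureTheory.Measure Ω ) [IsProbabilityMeasure P]

noncomputable instance : CommRing (Ω →ₘ[P] ℝ) :=
  { (inferInstance : AddCommGroup (Ω →ₘ[P] ℝ)),
    (inferInstance : CommMonoid (Ω →ₘ[P] ℝ)) with
    left_distrib := fun f g h => AEEqFun.ext (by
      filter_upwards [AEEqFun.coeFn_mul f (g + h), AEEqFun.coeFn_add g h,
        AEEqFun.coeFn_add (f * g) (f * h), AEEqFun.coeFn_mul f g, AEEqFun.coeFn_mul f h]
        with ω h1 h2 h3 h4 h5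
      simp only [Pi.mul_apply, Pi.add_apply] at *
      rw [h1, h2, h3, h4, h5, mul_add])
    right_distrib := fun f g h => AEEqFun.ext (by
      filter_upwards [AEEqFun.coeFn_mul (f + g) h, AEEqFun.coeFn_add f g,
        AEEqFun.coeFn_add (f * h) (g * h), AEEqFun.coeFn_mul f h, AEEqFun.coeFn_mul g h]
        with ω h1 h2 h3 h4 h5
      simp only [Pi.mul_apply, Pi.add_apply] at *
      rw [h1, h2, h3, h4, h5, add_mul])
    zero_mul := fun f => AEEqFun.ext (by
      filter_upwards [AEEqFun.coeFn_mul 0 f, AEEqFun.coeFn_zero (β := ℝ) (μ := P)]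
        with ω h1 h2
      simp only [Pi.mul_apply, Pi.zero_apply] at *
      rw [h1, h2, zero_mul])
    mul_zero := fun f => AEEqFun.ext (by
      filter_upwards [AEEqFun.coeFn_mul f 0, AEEqFun.coeFn_zero (β := ℝ) (μ := P)]
        with ω h1 h2
      simp only [Pi.mul_apply, Pi.zero_apply] at *
      rw [h1, h2, mul_zero]) }

/-- `L⁰₊₊`: the set of a.e. strictly positive elements. -/
def L0pp (Y : Ω →ₘ[P] ℝ) : Prop := ∀ᵐ ω ∂P, 0 < Y ω

/-- The equivalence class of the indicator function of a measurable set. -/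
noncomputable def ind (A : Set Ω) (hA : MeasurableSet A) : Ω →ₘ[P] ℝ :=
  AEEqFun.mk (A.indicator fun _ => (1 : ℝ)) (aestronglyMeasurable_const.indicator hA)

section ModuleDefs

variable {E : Type*} [AddCommGroup E] [Module (Ω →ₘ[P] ℝ) E]

/-- `L⁰`-convexity of a subset of an `L⁰`-module. -/
def IsL0Convex (U : Set E) : Prop :=
  ∀ X₁ ∈ U, ∀ X₂ ∈ U, ∀ Y : Ω →ₘ[P] ℝ, 0 ≤ Y → Y ≤ 1 → Y • X₁ + (1 - Y) • X₂ ∈ U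

/-- `L⁰`-absorbency of a subset of an `L⁰`-module. -/
def IsL0Absorbent (U : Set E) : Prop :=
  ∀ X : E, ∃ Y : Ω →ₘ[P] ℝ, L0pp P Y ∧ X ∈ Y • U

/-- `L⁰`-balancedness of a subset of an `L⁰`-module. -/
def IsL0Balanced (U : Set E) : Prop :=
  ∀ X ∈ U, ∀ Y : Ω →ₘ[P] ℝ, |Y| ≤ 1 → Y • X ∈ U

/-- Closedness under countable concatenations. -/
def IsConcatClosed (C : Set E) : Prop :=
  ∀ (A : ℕ → Set Ω) (hA : ∀ n, MeasurableSet (A n)),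
    Pairwise (Function.onFun Disjoint A) → (⋃ n, A n) = Set.univ →
    ∀ X : E, (∀ n, ∃ Xn ∈ C, ind P (A n) (hA n) • X = ind P (A n) (hA n) • Xn) → X ∈ C

/-- `L⁰`-seminorm. -/
def IsL0Seminorm (p : E → (Ω →ₘ[P] ℝ)) : Prop :=
  (∀ X : E, 0 ≤ p X) ∧ (∀ (Y : Ω →ₘ[P] ℝ) (X : E), p (Y • X) = |Y| * p X) ∧
    (∀ X₁ X₂ : E, p (X₁ + X₂) ≤ p X₁ + p X₂)

/-- The set whose essential infimum is the gauge `p_K(X)`. -/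
def gaugeSet (K : Set E) (X : E) : Set (Ω →ₘ[P] ℝ) :=
  {Y : Ω →ₘ[P] ℝ | 0 ≤ Y ∧ X ∈ Y • K}

end ModuleDefs

/-- The set `U_ε` of the counterexample: `Y ∈ U_ε` iff `|Y·1_{A_i}| ≤ ε` a.e. for all `i`
outside some finite set `I ⊆ ℕ`. -/
def Uset (A : ℕ → Set Ω) (hA : ∀ n, MeasurableSet (A n)) (ε : Ω →ₘ[P] ℝ) :
    Set (Ω →ₘ[P] ℝ) :=
  {Y : Ω →ₘ[P] ℝ | ∃ I : Finset ℕ, ∀ i ∉ I, |Y * ind P (A i) (hA i)| ≤ ε}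


/-!
Let `k ω` be the index of the piece of the partition containing `ω`. The set `U` consists of the
`Z` with `|Z| ≤ 1` a.e. on `{k = i}` for all but finitely many `i`, and `X = k`. Convexity and
balancedness of `U` hold piece by piece, and absorbency comes from `W = (|W| + 1) • W / (|W| + 1)`.
For every `n`, `X ∈ dₙ • U` where `dₙ = 1 / (n + 1)` on `{k ≤ n}` and `dₙ = X` on `{k > n}`,
so `p_U(X) = 0`. But `X` exceeds `1` on infinitely many pieces, all of positive measure, so `X ∉ U`.
-/

open Set Filter Topology MeasureTheory AEEqFun

lemma exists_preimage_singleton_eq_of_partition {α ι : Type*} {A : ι → Set α}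
    (hdisj : Pairwise (Function.onFun Disjoint A)) (hcover : (⋃ i, A i) = univ) :
    ∃ k : α → ι, ∀ i, k ⁻¹' {i} = A i := by
  choose k hk using fun ω => mem_iUnion.1 (hcover ▸ mem_univ ω)
  refine ⟨k, fun i => Set.ext fun ω => ⟨fun h => ?_, fun hω => ?_⟩⟩
  · exact (mem_singleton_iff.1 h) ▸ hk ω
  · by_contra hne
    exact disjoint_left.1 (hdisj hne) (hk ω) hω

variable {μ : Measure Ω}

namespace MeasureTheory.AEEqFun

lemma abs_le_one_iff {Z : Ω →ₘ[μ] ℝ} : |Z| ≤ 1 ↔ ∀ᵐ ω ∂μ, |Z ω| ≤ 1 := by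
  rw [← coeFn_le]
  refine eventually_congr ?_
  filter_upwards [coeFn_abs Z, coeFn_one (β := ℝ) (μ := μ)] with ω habs hone
  rw [habs, hone, Pi.one_apply]

lemma zero_lt_one_of_neZero [NeZero μ] : (0 : Ω →ₘ[μ] ℝ) < 1 := by
  refine lt_of_le_of_ne (coeFn_le.1 ?_) fun h => ?_
  · filter_upwards [coeFn_zero (β := ℝ) (μ := μ), coeFn_one (β := ℝ) (μ := μ)] with ω h0 h1
    simp [h0, h1]
  · obtain ⟨ω, h0, h1⟩ := ((coeFn_zero (β := ℝ) (μ := μ)).and (h ▸ coeFn_one)).exists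
    simp [h0] at h1

lemma exists_pos_mul_abs_le_one (W : Ω →ₘ[μ] ℝ) :
    ∃ Y Z : Ω →ₘ[μ] ℝ, L0pp μ Y ∧ |Z| ≤ 1 ∧ Y * Z = W := by
  have hY : AEMeasurable (fun ω => |W ω| + 1) μ :=
    (measurable_abs.comp_aemeasurable W.aemeasurable).add_const 1
  have hZ := (W.aemeasurable.div hY).aestronglyMeasurable
  refine ⟨mk _ hY.aestronglyMeasurable, mk _ hZ, ?_, ?_, ?_⟩
  · filter_upwards [coeFn_mk _ hY.aestronglyMeasurable] with ω h
    rw [h]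
    positivity
  · rw [AEEqFun.abs_le_one_iff]
    filter_upwards [coeFn_mk _ hZ] with ω h
    rw [h, Pi.div_apply, abs_div, abs_of_pos (by positivity : 0 < |W ω| + 1),
      div_le_one (by positivity)]
    linarith
  · refine (mk_mul_mk _ _ _ _).trans ((mk_eq_mk.2 (.of_forall fun ω => ?_)).trans W.mk_coeFn)
    simp only [Pi.mul_apply, Pi.div_apply]
    field_simp

end MeasureTheory.AEEqFun

def unitBallOn (μ : Measure Ω) (S : Set Ω) : Set (Ω →ₘ[μ] ℝ) :=
  {Z | ∀ᵐ ω ∂μ, ω ∈ S → |Z ω| ≤ 1}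

lemma mem_unitBallOn_of_abs_le_one {S : Set Ω} {Z : Ω →ₘ[μ] ℝ} (hZ : |Z| ≤ 1) :
    Z ∈ unitBallOn μ S :=
  (AEEqFun.abs_le_one_iff.1 hZ).mono fun _ h _ => h

lemma convexComb_mem_unitBallOn {S : Set Ω} {Y Z₁ Z₂ : Ω →ₘ[μ] ℝ} (hY₀ : 0 ≤ Y) (hY₁ : Y ≤ 1)
    (h₁ : Z₁ ∈ unitBallOn μ S) (h₂ : Z₂ ∈ unitBallOn μ S) :
    Y * Z₁ + (1 - Y) * Z₂ ∈ unitBallOn μ S := by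
  filter_upwards [h₁, h₂, coeFn_le.2 hY₀, coeFn_le.2 hY₁, coeFn_add (Y * Z₁) ((1 - Y) * Z₂),
    coeFn_mul Y Z₁, coeFn_mul (1 - Y) Z₂, coeFn_sub 1 Y, coeFn_zero (β := ℝ) (μ := μ),
    coeFn_one (β := ℝ) (μ := μ)] with ω h₁ h₂ hY₀ hY₁ hadd hmul₁ hmul₂ hsub hzero hone hω
  simp only [hadd, hmul₁, hmul₂, hsub, hzero, hone, Pi.add_apply, Pi.mul_apply, Pi.sub_apply,
    Pi.zero_apply, Pi.one_apply] at hY₀ hY₁ ⊢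
  have h₁ := abs_le.1 (h₁ hω)
  have h₂ := abs_le.1 (h₂ hω)
  rw [abs_le]
  constructor <;> nlinarith

lemma mul_mem_unitBallOn {S : Set Ω} {Y Z : Ω →ₘ[μ] ℝ} (hY : |Y| ≤ 1)
    (hZ : Z ∈ unitBallOn μ S) : Y * Z ∈ unitBallOn μ S := by
  filter_upwards [AEEqFun.abs_le_one_iff.1 hY, hZ, coeFn_mul Y Z] with ω hY hZ hmul hω
  rw [hmul, Pi.mul_apply, abs_mul]
  exact mul_le_one₀ hY (abs_nonneg _) (hZ hω)

section Uset

variable {A : ℕ → Set Ω} (hA : ∀ n, MeasurableSet (A n))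
include hA

lemma abs_mul_ind_le_one_iff (Z : Ω →ₘ[μ] ℝ) (i : ℕ) :
    |Z * ind μ (A i) (hA i)| ≤ 1 ↔ Z ∈ unitBallOn μ (A i) := by
  rw [AEEqFun.abs_le_one_iff]
  refine eventually_congr ?_
  filter_upwards [coeFn_mk ((A i).indicator fun _ => (1 : ℝ)) _, coeFn_mul Z (ind μ (A i) (hA i))]
    with ω hind hmul
  rw [hmul, Pi.mul_apply, ind, hind]
  by_cases hω : ω ∈ A i <;> simp [hω]

lemma mem_Uset_one_iff {Z : Ω →ₘ[μ] ℝ} :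
    Z ∈ Uset μ A hA 1 ↔ ∀ᶠ i in cofinite, Z ∈ unitBallOn μ (A i) := by
  simp only [Uset, mem_ofPred_eq, abs_mul_ind_le_one_iff hA]
  refine ⟨fun ⟨I, hI⟩ => (I.eventually_cofinite_notMem).mono hI, fun h => ?_⟩
  exact ⟨h.toFinset, fun i hi => of_not_not fun hi' => hi (h.mem_toFinset.2 hi')⟩

lemma isL0Convex_Uset : IsL0Convex μ (Uset μ A hA 1) := by
  intro Z₁ h₁ Z₂ h₂ Y hY₀ hY₁
  rw [mem_Uset_one_iff hA] at h₁ h₂ ⊢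
  exact (h₁.and h₂).mono fun i h => convexComb_mem_unitBallOn hY₀ hY₁ h.1 h.2

lemma isL0Balanced_Uset : IsL0Balanced μ (Uset μ A hA 1) := by
  intro Z hZ Y hY
  rw [mem_Uset_one_iff hA] at hZ ⊢
  exact hZ.mono fun i h => mul_mem_unitBallOn hY h

lemma isL0Absorbent_Uset : IsL0Absorbent μ (Uset μ A hA 1) := by
  intro W
  obtain ⟨Y, Z, hY, hZ, rfl⟩ := AEEqFun.exists_pos_mul_abs_le_one W
  exact ⟨Y, hY, Z, (mem_Uset_one_iff hA).2 (.of_forall fun _ => mem_unitBallOn_of_abs_le_one hZ),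
    rfl⟩

end Uset

section OfIndex

variable {ι : Type*} [MeasurableSpace ι] [Countable ι] [MeasurableSingletonClass ι]
  {k : Ω → ι} (hk : Measurable k)

def ofIndex (μ : Measure Ω) (c : ι → ℝ) : Ω →ₘ[μ] ℝ :=
  mk (c ∘ k) ((measurable_of_countable c).comp hk).aestronglyMeasurable

lemma coeFn_ofIndex (c : ι → ℝ) : ⇑(ofIndex hk μ c) =ᵐ[μ] c ∘ k :=
  coeFn_mk _ _

lemma ofIndex_mul (c d : ι → ℝ) : ofIndex hk μ c * ofIndex hk μ d = ofIndex hk μ (c * d) :=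
  mk_mul_mk _ _ _ _

lemma ofIndex_nonneg {c : ι → ℝ} (hc : 0 ≤ c) : 0 ≤ ofIndex hk μ c := by
  refine coeFn_le.1 ?_
  filter_upwards [coeFn_zero (β := ℝ) (μ := μ), coeFn_ofIndex hk c] with ω h0 h
  rw [h0, h]
  exact hc _

lemma ofIndex_mem_unitBallOn {c : ι → ℝ} {i : ι} (hc : |c i| ≤ 1) :
    ofIndex hk μ c ∈ unitBallOn μ (k ⁻¹' {i}) := by
  filter_upwards [coeFn_ofIndex hk c] with ω h hω
  rwa [h, Function.comp_apply, mem_singleton_iff.1 hω]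

lemma abs_le_one_of_ofIndex_mem_unitBallOn {c : ι → ℝ} {i : ι} (hi : μ (k ⁻¹' {i}) ≠ 0)
    (hc : ofIndex hk μ c ∈ unitBallOn μ (k ⁻¹' {i})) : |c i| ≤ 1 := by
  by_contra hci
  refine hi (measure_eq_zero_iff_ae_notMem.2 ?_)
  filter_upwards [hc, coeFn_ofIndex hk c] with ω hc h hω
  rw [h, Function.comp_apply, mem_singleton_iff.1 hω] at hc
  exact hci (hc hω)

lemma isGLB_zero_of_tendsto_ofIndex {S : Set (Ω →ₘ[μ] ℝ)} (hS : ∀ Y ∈ S, 0 ≤ Y)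
    (d : ℕ → ι → ℝ) (hdS : ∀ n, ofIndex hk μ (d n) ∈ S)
    (hd : ∀ i, Tendsto (fun n => d n i) atTop (𝓝 0)) : IsGLB S 0 := by
  refine ⟨hS, fun Z hZ => coeFn_le.1 ?_⟩
  have hle : ∀ᵐ ω ∂μ, ∀ n, Z ω ≤ d n (k ω) := ae_all_iff.2 fun n => by
    filter_upwards [coeFn_le.2 (hZ (hdS n)), coeFn_ofIndex hk (d n)] with ω hZ h
    rwa [h] at hZ
  filter_upwards [hle, coeFn_zero (β := ℝ) (μ := μ)] with ω hle h0
  rw [h0]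
  exact ge_of_tendsto' (hd (k ω)) hle

end OfIndex

section Counterexample

variable {k : Ω → ℕ} (hk : Measurable k) (hA : ∀ n, MeasurableSet (k ⁻¹' {n}))
include hk hA

lemma ofIndex_mem_Uset {c : ℕ → ℝ} (hc : ∀ᶠ i in cofinite, |c i| ≤ 1) :
    ofIndex hk μ c ∈ Uset μ _ hA 1 :=
  (mem_Uset_one_iff hA).2 (hc.mono fun _ => ofIndex_mem_unitBallOn hk)

lemma eventually_abs_le_one_of_ofIndex_mem_Uset (hpos : ∀ n, 0 < μ (k ⁻¹' {n})) {c : ℕ → ℝ}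
    (hc : ofIndex hk μ c ∈ Uset μ _ hA 1) : ∀ᶠ i in cofinite, |c i| ≤ 1 :=
  ((mem_Uset_one_iff hA).1 hc).mono fun i =>
    abs_le_one_of_ofIndex_mem_unitBallOn hk (hpos i).ne'

lemma ofIndex_mem_gaugeSet_Uset {c d : ℕ → ℝ} (hd : ∀ i, 0 < d i)
    (hcd : ∀ᶠ i in cofinite, |c i| ≤ d i) :
    ofIndex hk μ d ∈ gaugeSet μ (Uset μ _ hA 1) (ofIndex hk μ c) := by
  refine ⟨ofIndex_nonneg hk fun i => (hd i).le, ofIndex hk μ (c / d), ?_, ?_⟩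
  · refine ofIndex_mem_Uset hk hA (hcd.mono fun i h => ?_)
    rwa [Pi.div_apply, abs_div, abs_of_pos (hd i), div_le_one (hd i)]
  · change ofIndex hk μ d * _ = _
    rw [ofIndex_mul]
    congr 1
    funext i
    simp [mul_div_cancel₀ _ (hd i).ne']

lemma isGLB_gaugeSet_Uset_ofIndex_natCast :
    IsGLB (gaugeSet μ (Uset μ _ hA 1) (ofIndex hk μ (↑))) 0 := by
  let d (n i : ℕ) : ℝ := if i ≤ n then 1 / (n + 1) else i
  refine isGLB_zero_of_tendsto_ofIndex hk (fun Y hY => hY.1) d (fun n => ?_) fun i => ?_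
  · refine ofIndex_mem_gaugeSet_Uset hk hA (fun i => ?_) ?_
    · simp only [d]
      split_ifs with hin
      · positivity
      · exact Nat.cast_pos.2 (by omega)
    · rw [Nat.cofinite_eq_atTop]
      filter_upwards [eventually_gt_atTop n] with i hni
      simp [d, hni.not_ge]
  · refine tendsto_one_div_add_atTop_nhds_zero_nat.congr' ?_
    filter_upwards [eventually_ge_atTop i] with n hin
    simp [d, hin]

lemma ofIndex_natCast_notMem_Uset (hpos : ∀ n, 0 < μ (k ⁻¹' {n})) :
    ofIndex hk μ (↑) ∉ Uset μ _ hA 1 := fun hX => by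
  obtain ⟨i, hi, h2i⟩ := ((eventually_abs_le_one_of_ofIndex_mem_Uset hk hA hpos hX).and
    (Nat.cofinite_eq_atTop ▸ eventually_ge_atTop 2)).exists
  rw [Nat.abs_cast] at hi
  exact absurd (hi.trans_lt one_lt_two) (not_lt.2 (by exact_mod_cast h2i))

end Counterexample

theorem stmt_15_general {Ω : Type*} [MeasurableSpace Ω] (P : MeasureTheory.Measure Ω)
    (A : ℕ → Set Ω) (hA : ∀ n, MeasurableSet (A n))
    (hdisj : Pairwise (Function.onFun Disjoint A)) (hcover : (⋃ n, A n) = Set.univ)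
    (hpos : ∀ n, 0 < P (A n)) :
    ∃ (U : Set (Ω →ₘ[P] ℝ)) (X : Ω →ₘ[P] ℝ),
      IsL0Convex P U ∧ IsL0Absorbent P U ∧ IsL0Balanced P U ∧
      IsGLB (gaugeSet P U X) 0 ∧ (0 : Ω →ₘ[P] ℝ) < 1 ∧ X ∉ U := by
  obtain ⟨k, hkA⟩ := exists_preimage_singleton_eq_of_partition hdisj hcover
  obtain rfl : A = fun n => k ⁻¹' {n} := funext fun n => (hkA n).symm
  have hk : Measurable k := measurable_to_countable' hA
  have : NeZero P := ⟨fun h => by simp [h] at hpos⟩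
  exact ⟨Uset P _ hA 1, ofIndex hk P (↑), isL0Convex_Uset hA, isL0Absorbent_Uset hA,
    isL0Balanced_Uset hA, isGLB_gaugeSet_Uset_ofIndex_natCast hk hA,
    AEEqFun.zero_lt_one_of_neZero, ofIndex_natCast_notMem_Uset hk hA hpos⟩

/-- there is an `L⁰`-convex, `L⁰`-absorbent, `L⁰`-balanced set
`U ⊆ L⁰` and `X ∈ L⁰` with `p_U(X) = 0 < 1` but `X ∉ U`; so
`{X : p_U(X) < 1} ⊆ U` fails in general. -/
theorem stmt_15 {Ω : Type*} [MeasurableSpace Ω] (P : MeasureTheory.Measure Ω)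
    [IsProbabilityMeasure P]
    (A : ℕ → Set Ω) (hA : ∀ n, MeasurableSet (A n))
    (hdisj : Pairwise (Function.onFun Disjoint A)) (hcover : (⋃ n, A n) = Set.univ)
    (hpos : ∀ n, 0 < P (A n)) :
    ∃ (U : Set (Ω →ₘ[P] ℝ)) (X : Ω →ₘ[P] ℝ),
      IsL0Convex P U ∧ IsL0Absorbent P U ∧ IsL0Balanced P U ∧
      IsGLB (gaugeSet P U X) 0 ∧ (0 : Ω →ₘ[P] ℝ) < 1 ∧ X ∉ U :=
  stmt_15_general P A hA hdisj hcover hpos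
end

section
/- There is no family 𝒫 of L⁰-seminorms on the L⁰-module L⁰ such that the family of seminorm balls {U_{Q,δ} := {X ∈ L⁰ : ‖X‖ ≤ δ a.e. for all ‖·‖ ∈ Q} : Q ⊆ 𝒫 finite, δ ∈ L⁰₊₊} and the family {U_ε : ε ∈ L⁰₊₊}, where U_ε := {Y ∈ L⁰ : ∃ finite I ⊆ ℕ such that |Y·1_{A_i}| ≤ ε a.e. for all i ∉ I}, are mutually refining (i.e., every U_ε contains some U_{Q,δ} and every U_{Q,δ} contains some U_ε). Hence the locally L⁰-convex topology on L⁰ generated by the neighborhood base {U_ε : ε ∈ L⁰₊₊} of 0 is not induced by any family of L⁰-seminorms. -/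
open MeasureTheory Filter Pointwise

variable {Ω : Type*} [MeasurableSpace Ω] (P : MeasureTheory.Measure Ω ) [IsProbabilityMeasure P]

/-!
Take `ε = 1`: some ball `U_{Q,δ}` lies in `U_1`, and some `U_ε` lies in `U_{Q,δ}`. Every
`c · 1_{A_n}` vanishes off `A_n`, so it belongs to every `U_ε` and hence to the ball. A seminorm
is local (`1_{A_n} ‖X‖ = ‖1_{A_n} X‖`), so the ball is closed under countable concatenation along
the partition and contains `X = ∑ₙ n · 1_{A_n}`. But `X ∉ U_1`, since `|X 1_{A_n}| = n` on the
non-null sets `A_n`.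
-/

namespace L0

variable {Ω : Type*} [MeasurableSpace Ω] {P : Measure Ω}

lemma coeFn_ind {A : Set Ω} (hA : MeasurableSet A) :
    (ind P A hA : Ω → ℝ) =ᵐ[P] A.indicator fun _ => 1 :=
  AEEqFun.coeFn_mk _ _

lemma abs_ind {A : Set Ω} (hA : MeasurableSet A) : |ind P A hA| = ind P A hA := by
  apply AEEqFun.ext
  filter_upwards [AEEqFun.coeFn_abs (ind P A hA), coeFn_ind hA] with ω habs hind
  rw [habs, hind]
  exact abs_of_nonneg (Set.indicator_nonneg (fun _ _ => zero_le_one) ω)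

lemma ind_mul_ind_of_disjoint {A B : Set Ω} (hA : MeasurableSet A) (hB : MeasurableSet B)
    (hAB : Disjoint A B) : ind P A hA * ind P B hB = 0 := by
  apply AEEqFun.ext
  filter_upwards [AEEqFun.coeFn_mul (ind P A hA) (ind P B hB), coeFn_ind hA, coeFn_ind hB,
    AEEqFun.coeFn_zero (β := ℝ) (μ := P)] with ω hmul hindA hindB hzero
  rw [hmul, Pi.mul_apply, hindA, hindB, hzero, Pi.zero_apply]
  by_cases hω : ω ∈ A
  · rw [Set.indicator_of_notMem (Set.disjoint_left.mp hAB hω), mul_zero]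
  · rw [Set.indicator_of_notMem hω, zero_mul]

lemma nonneg_of_L0pp {ε : Ω →ₘ[P] ℝ} (hε : L0pp P ε) : 0 ≤ ε := by
  rw [← AEEqFun.coeFn_le]
  filter_upwards [hε, AEEqFun.coeFn_zero (β := ℝ) (μ := P)] with ω hεω hzero
  rw [hzero]
  exact hεω.le

lemma one_L0pp : L0pp P (1 : Ω →ₘ[P] ℝ) := by
  filter_upwards [AEEqFun.coeFn_one (β := ℝ) (μ := P)] with ω hω
  rw [hω, Pi.one_apply]
  exact one_pos

lemma abs_le_of_abs_const_mul_ind_le {A : Set Ω} (hA : MeasurableSet A) (hA0 : P A ≠ 0)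
    {c d : ℝ} (h : |AEEqFun.const Ω c * ind P A hA| ≤ AEEqFun.const Ω d) : |c| ≤ d := by
  by_contra hcd
  refine hA0 (measure_eq_zero_iff_ae_notMem.mpr ?_)
  filter_upwards [AEEqFun.coeFn_le.mpr h, AEEqFun.coeFn_abs (AEEqFun.const Ω c * ind P A hA),
    AEEqFun.coeFn_mul (AEEqFun.const Ω c) (ind P A hA), AEEqFun.coeFn_const Ω c,
    AEEqFun.coeFn_const Ω d, coeFn_ind hA] with ω hle habs hmul hc hd hind hω
  rw [habs, hmul, Pi.mul_apply, hc, hd, hind, Set.indicator_of_mem hω,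
    Function.const_apply, Function.const_apply, mul_one] at hle
  exact hcd hle

lemma mul_ind_mem_Uset [IsProbabilityMeasure P] {A : ℕ → Set Ω}
    (hA : ∀ n, MeasurableSet (A n)) (hdisj : Pairwise (Function.onFun Disjoint A))
    {ε : Ω →ₘ[P] ℝ} (hε : 0 ≤ ε) (c : Ω →ₘ[P] ℝ) (n : ℕ) :
    c * ind P (A n) (hA n) ∈ Uset P A hA ε := by
  refine ⟨{n}, fun i hi => ?_⟩
  rw [mul_assoc, ind_mul_ind_of_disjoint _ _ (hdisj (Ne.symm (Finset.notMem_singleton.mp hi))),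
    mul_zero]
  simpa only [abs, neg_zero, sup_idem] using hε

lemma le_of_forall_ind_mul_le {A : ℕ → Set Ω} (hA : ∀ n, MeasurableSet (A n))
    (hcover : (⋃ n, A n) = Set.univ) {f g : Ω →ₘ[P] ℝ}
    (h : ∀ n, ind P (A n) (hA n) * f ≤ g) : f ≤ g := by
  have hle : ∀ n, ∀ᵐ ω ∂P, ω ∈ A n → f ω ≤ g ω := fun n => by
    filter_upwards [AEEqFun.coeFn_le.mpr (h n), AEEqFun.coeFn_mul (ind P (A n) (hA n)) f,
      coeFn_ind (hA n)] with ω hle hmul hind hω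
    rwa [hmul, Pi.mul_apply, hind, Set.indicator_of_mem hω, one_mul] at hle
  rw [← AEEqFun.coeFn_le]
  filter_upwards [ae_all_iff.mpr hle] with ω hω
  obtain ⟨n, hn⟩ := Set.mem_iUnion.mp (hcover ▸ Set.mem_univ ω)
  exact hω n hn

lemma IsL0Seminorm.le_of_forall_ind_mul_le [IsProbabilityMeasure P]
    {p : (Ω →ₘ[P] ℝ) → (Ω →ₘ[P] ℝ)} (hp : IsL0Seminorm P p) {A : ℕ → Set Ω}
    (hA : ∀ n, MeasurableSet (A n)) (hcover : (⋃ n, A n) = Set.univ) {X δ : Ω →ₘ[P] ℝ}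
    (h : ∀ n, p (ind P (A n) (hA n) * X) ≤ δ) : p X ≤ δ :=
  L0.le_of_forall_ind_mul_le hA hcover fun n => by
    rw [← abs_ind (hA n), ← hp.2.1]
    exact h n

lemma exists_ind_mul_eq_const_mul_ind {A : ℕ → Set Ω} (hA : ∀ n, MeasurableSet (A n))
    (hdisj : Pairwise (Function.onFun Disjoint A)) (hcover : (⋃ n, A n) = Set.univ)
    (c : ℕ → ℝ) :
    ∃ X : Ω →ₘ[P] ℝ, ∀ n,
      ind P (A n) (hA n) * X = AEEqFun.const Ω (c n) * ind P (A n) (hA n) := by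
  classical
  have hex : ∀ ω, ∃ n, ω ∈ A n := fun ω => Set.mem_iUnion.mp (hcover ▸ Set.mem_univ ω)
  let idx : Ω → ℕ := fun ω => Nat.find (hex ω)
  have idx_eq : ∀ {ω n}, ω ∈ A n → idx ω = n := fun {ω n} hω => by
    by_contra hne
    exact Set.disjoint_left.mp (hdisj hne) (Nat.find_spec (hex ω)) hω
  have hidx : Measurable idx := measurable_to_countable' fun n => by
    convert hA n
    ext ω
    exact ⟨fun h => h ▸ Nat.find_spec (hex ω), idx_eq⟩
  have hf : AEStronglyMeasurable (fun ω => c (idx ω)) P :=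
    (measurable_from_top.comp hidx).aestronglyMeasurable
  refine ⟨AEEqFun.mk _ hf, fun n => AEEqFun.ext ?_⟩
  filter_upwards [AEEqFun.coeFn_mul (ind P (A n) (hA n)) (AEEqFun.mk _ hf),
    AEEqFun.coeFn_mul (AEEqFun.const Ω (c n)) (ind P (A n) (hA n)), coeFn_ind (hA n),
    AEEqFun.coeFn_mk _ hf, AEEqFun.coeFn_const Ω (c n)] with ω hmul hmul' hind hX hc
  rw [hmul, hmul', Pi.mul_apply, Pi.mul_apply, hind, hX, hc, Function.const_apply]
  by_cases hω : ω ∈ A n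
  · rw [Set.indicator_of_mem hω, idx_eq hω, one_mul, mul_one]
  · rw [Set.indicator_of_notMem hω, zero_mul, mul_zero]

end L0

open L0 in
/-- no family of `L⁰`-seminorms on `L⁰` has its balls mutually refining
with the family `{U_ε : ε ∈ L⁰₊₊}`; hence the locally `L⁰`-convex topology generated by
the neighborhood base `{U_ε}` of `0` is not induced by any family of `L⁰`-seminorms. -/
theorem stmt_16 {Ω : Type*} [MeasurableSpace Ω] (P : MeasureTheory.Measure Ω)
    [IsProbabilityMeasure P]
    (A : ℕ → Set Ω) (hA : ∀ n, MeasurableSet (A n))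
    (hdisj : Pairwise (Function.onFun Disjoint A)) (hcover : (⋃ n, A n) = Set.univ)
    (hpos : ∀ n, 0 < P (A n)) :
    ¬ ∃ Ps : Set ((Ω →ₘ[P] ℝ) → (Ω →ₘ[P] ℝ)),
      (∀ p ∈ Ps, IsL0Seminorm P p) ∧
      (∀ ε : Ω →ₘ[P] ℝ, L0pp P ε →
        ∃ (Q : Finset ((Ω →ₘ[P] ℝ) → (Ω →ₘ[P] ℝ))) (δ : Ω →ₘ[P] ℝ),
          (Q : Set ((Ω →ₘ[P] ℝ) → (Ω →ₘ[P] ℝ))) ⊆ Ps ∧ L0pp P δ ∧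
          {X : Ω →ₘ[P] ℝ | ∀ p ∈ Q, p X ≤ δ} ⊆ Uset P A hA ε) ∧
      (∀ (Q : Finset ((Ω →ₘ[P] ℝ) → (Ω →ₘ[P] ℝ))) (δ : Ω →ₘ[P] ℝ),
        (Q : Set ((Ω →ₘ[P] ℝ) → (Ω →ₘ[P] ℝ))) ⊆ Ps → L0pp P δ →
        ∃ ε : Ω →ₘ[P] ℝ, L0pp P ε ∧
          Uset P A hA ε ⊆ {X : Ω →ₘ[P] ℝ | ∀ p ∈ Q, p X ≤ δ}) := by
  rintro ⟨Ps, hsem, hball_sub, hsub_ball⟩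
  obtain ⟨Q, δ, hQ, hδ, hball⟩ := hball_sub 1 one_L0pp
  obtain ⟨ε, hε, hsub⟩ := hsub_ball Q δ hQ hδ
  obtain ⟨X, hX⟩ := exists_ind_mul_eq_const_mul_ind hA hdisj hcover fun n => (n : ℝ)
  have hX_ball : ∀ p ∈ Q, p X ≤ δ := fun p hp =>
    (hsem p (hQ hp)).le_of_forall_ind_mul_le hA hcover fun n => by
      rw [hX n]
      exact hsub (mul_ind_mem_Uset hA hdisj (nonneg_of_L0pp hε) _ n) p hp
  obtain ⟨I, hI⟩ := hball hX_ball
  obtain ⟨i, hi⟩ := Infinite.exists_notMem_finset (I ∪ Finset.range 2)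
  rw [Finset.mem_union, Finset.mem_range, not_or, not_lt] at hi
  have hXi := hI i hi.1
  rw [mul_comm, hX i, AEEqFun.one_def] at hXi
  have hi_le := abs_le_of_abs_const_mul_ind_le (hA i) (hpos i).ne' hXi
  rw [Nat.abs_cast] at hi_le
  exact absurd hi_le (by exact_mod_cast (show ¬ i ≤ 1 by omega))
end

section
/- Let ε, ε' ∈ L⁰₊₊ and let V ⊆ L⁰ be any set with U_{ε'} ⊆ V ⊆ U_ε, where U_η := {Y ∈ L⁰ : ∃ finite I ⊆ ℕ such that |Y·1_{A_i}| ≤ η a.e. for all i ∉ I}. Then V is not closed under countable concatenations: the element ε+1 satisfies (ε+1)·1_{A_n} ∈ U_{ε'} ⊆ V for every n, so that 1_{A_n}·(ε+1) = 1_{A_n}·X_n with X_n := (ε+1)·1_{A_n} ∈ V, yet ε+1 ∉ U_ε ⊇ V. Consequently, any neighborhood base of 0 generating the same topology as {U_η : η ∈ L⁰₊₊} contains sets that are not closed under countable concatenations. -/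
open MeasureTheory Filter Pointwise

variable {Ω : Type*} [MeasurableSpace Ω] (P : MeasureTheory.Measure Ω ) [IsProbabilityMeasure P]

section

variable {μ : Measure Ω}

lemma coeFn_ind {A : Set Ω} (hA : MeasurableSet A) :
    ind μ A hA =ᵐ[μ] A.indicator fun _ => (1 : ℝ) :=
  AEEqFun.coeFn_mk _ _

lemma ind_mul_self {A : Set Ω} (hA : MeasurableSet A) : ind μ A hA * ind μ A hA = ind μ A hA := by
  apply AEEqFun.ext
  filter_upwards [AEEqFun.coeFn_mul (ind μ A hA) (ind μ A hA), coeFn_ind (μ := μ) hA]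
    with ω hmul hind
  rw [hmul, Pi.mul_apply, hind]
  by_cases hω : ω ∈ A <;> simp [hω]

lemma ind_mul_ind_of_disjoint {A B : Set Ω} (hA : MeasurableSet A) (hB : MeasurableSet B)
    (hAB : Disjoint A B) : ind μ A hA * ind μ B hB = 0 := by
  apply AEEqFun.ext
  filter_upwards [AEEqFun.coeFn_mul (ind μ A hA) (ind μ B hB), coeFn_ind (μ := μ) hA,
    coeFn_ind (μ := μ) hB, AEEqFun.coeFn_zero (β := ℝ) (μ := μ)] with ω hmul hindA hindB hzero
  rw [hmul, hzero, Pi.mul_apply, hindA, hindB, Pi.zero_apply]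
  by_cases hω : ω ∈ A
  · simp [Set.disjoint_left.mp hAB hω]
  · simp [hω]

lemma ind_mul_mul_ind_self {B : Set Ω} (hB : MeasurableSet B) (X : Ω →ₘ[μ] ℝ) :
    ind μ B hB * (X * ind μ B hB) = ind μ B hB * X := by
  rw [mul_left_comm, ind_mul_self, mul_comm]

lemma measure_eq_zero_of_abs_mul_ind_le {A : Set Ω} (hA : MeasurableSet A)
    {X ε : Ω →ₘ[μ] ℝ} (hle : |X * ind μ A hA| ≤ ε) (hlt : ∀ᵐ ω ∂μ, ε ω < |X ω|) :
    μ A = 0 := by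
  rw [← AEEqFun.coeFn_le] at hle
  have hnotMem : ∀ᵐ ω ∂μ, ω ∉ A := by
    filter_upwards [hle, hlt, AEEqFun.coeFn_abs (X * ind μ A hA),
      AEEqFun.coeFn_mul X (ind μ A hA), coeFn_ind (μ := μ) hA] with ω hle hlt habs hmul hind hω
    rw [habs, hmul, Pi.mul_apply, hind, Set.indicator_of_mem hω, mul_one] at hle
    exact hle.not_gt hlt
  exact measure_eq_zero_iff_ae_notMem.mpr hnotMem

lemma L0pp.nonneg {Y : Ω →ₘ[μ] ℝ} (hY : L0pp μ Y) : 0 ≤ Y := by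
  rw [← AEEqFun.coeFn_le]
  filter_upwards [hY, AEEqFun.coeFn_zero (β := ℝ) (μ := μ)] with ω hpos hzero
  exact hzero ▸ hpos.le

lemma ae_lt_abs_add_one (ε : Ω →ₘ[μ] ℝ) : ∀ᵐ ω ∂μ, ε ω < |(ε + 1) ω| := by
  filter_upwards [AEEqFun.coeFn_add ε 1, AEEqFun.coeFn_one (β := ℝ) (μ := μ)] with ω hadd hone
  rw [hadd, Pi.add_apply, hone, Pi.one_apply]
  exact (lt_add_one _).trans_le (le_abs_self _)

variable {A : ℕ → Set Ω} {hA : ∀ n, MeasurableSet (A n)}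

lemma mul_ind_mem_Uset (hdisj : Pairwise (Function.onFun Disjoint A)) {ε : Ω →ₘ[μ] ℝ}
    (hε : 0 ≤ ε) (X : Ω →ₘ[μ] ℝ) (n : ℕ) : X * ind μ (A n) (hA n) ∈ Uset μ A hA ε := by
  refine ⟨{n}, fun i hi => ?_⟩
  -- `abs_zero` would need an `AddLeftMono` instance, which `Ω →ₘ[μ] ℝ` does not carry here
  rw [mul_assoc, ind_mul_ind_of_disjoint _ _ (hdisj (Ne.symm (Finset.notMem_singleton.mp hi))),
    mul_zero, abs, neg_zero, sup_idem]
  exact hε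

lemma notMem_Uset (hpos : ∀ n, 0 < μ (A n)) {X ε : Ω →ₘ[μ] ℝ}
    (hlt : ∀ᵐ ω ∂μ, ε ω < |X ω|) : X ∉ Uset μ A hA ε := by
  rintro ⟨I, hI⟩
  obtain ⟨i, hi⟩ := Infinite.exists_notMem_finset I
  exact (hpos i).ne' (measure_eq_zero_of_abs_mul_ind_le (hA i) (hI i hi) hlt)

lemma IsConcatClosed.mem_of_forall_mul_ind_mem {C : Set (Ω →ₘ[μ] ℝ)} (hC : IsConcatClosed μ C)
    (hdisj : Pairwise (Function.onFun Disjoint A)) (hcover : ⋃ n, A n = Set.univ)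
    {X : Ω →ₘ[μ] ℝ} (hX : ∀ n, X * ind μ (A n) (hA n) ∈ C) : X ∈ C :=
  hC A hA hdisj hcover X fun n => ⟨_, hX n, (ind_mul_mul_ind_self (hA n) X).symm⟩

end

theorem stmt_17_general {Ω : Type*} [MeasurableSpace Ω] (P : MeasureTheory.Measure Ω)
    (A : ℕ → Set Ω) (hA : ∀ n, MeasurableSet (A n))
    (hdisj : Pairwise (Function.onFun Disjoint A)) (hcover : (⋃ n, A n) = Set.univ)
    (hpos : ∀ n, 0 < P (A n))
    (ε ε' : Ω →ₘ[P] ℝ) (hε' : L0pp P ε')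
    (V : Set (Ω →ₘ[P] ℝ)) (hV₁ : Uset P A hA ε' ⊆ V) (hV₂ : V ⊆ Uset P A hA ε) :
    (∀ n, (ε + 1) * ind P (A n) (hA n) ∈ Uset P A hA ε') ∧
    (∀ n, ind P (A n) (hA n) * (ε + 1) =
      ind P (A n) (hA n) * ((ε + 1) * ind P (A n) (hA n))) ∧
    (ε + 1) ∉ Uset P A hA ε ∧
    ¬ IsConcatClosed P V := by
  have hmem : ∀ n, (ε + 1) * ind P (A n) (hA n) ∈ Uset P A hA ε' :=
    mul_ind_mem_Uset hdisj hε'.nonneg (ε + 1)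
  have hnotMem : (ε + 1) ∉ Uset P A hA ε := notMem_Uset hpos (ae_lt_abs_add_one ε)
  refine ⟨hmem, fun n => (ind_mul_mul_ind_self (hA n) (ε + 1)).symm, hnotMem, fun hV => ?_⟩
  exact hnotMem (hV₂ (hV.mem_of_forall_mul_ind_mem hdisj hcover fun n => hV₁ (hmem n)))

/-- any set `V` squeezed between two sets `U_{ε'} ⊆ V ⊆ U_ε` of the
counterexample basis is not closed under countable concatenations, witnessed by
`ε + 1`. -/
theorem stmt_17 {Ω : Type*} [MeasurableSpace Ω] (P : MeasureTheory.Measure Ω)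
    [IsProbabilityMeasure P]
    (A : ℕ → Set Ω) (hA : ∀ n, MeasurableSet (A n))
    (hdisj : Pairwise (Function.onFun Disjoint A)) (hcover : (⋃ n, A n) = Set.univ)
    (hpos : ∀ n, 0 < P (A n))
    (ε ε' : Ω →ₘ[P] ℝ) (hε : L0pp P ε) (hε' : L0pp P ε')
    (V : Set (Ω →ₘ[P] ℝ)) (hV₁ : Uset P A hA ε' ⊆ V) (hV₂ : V ⊆ Uset P A hA ε) :
    (∀ n, (ε + 1) * ind P (A n) (hA n) ∈ Uset P A hA ε') ∧
    (∀ n, ind P (A n) (hA n) * (ε + 1) =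
      ind P (A n) (hA n) * ((ε + 1) * ind P (A n) (hA n))) ∧
    (ε + 1) ∉ Uset P A hA ε ∧
    ¬ IsConcatClosed P V :=
  stmt_17_general P A hA hdisj hcover hpos ε ε' hε' V hV₁ hV₂
end
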